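/- For all i, j ∈ {1,2,3}, one has [P_i, P_j] = −Σ_k ε_{ijk} W^k as endomorphisms of V. -/

import Mathlib

open Finset

/-- Levi-Civita symbol on `{1,2,3}` (indexed by `Fin 3`). -/
def eps (i j k : Fin 3) : ℤ :=
  (((j : ℤ) - (i : ℤ)) * ((k : ℤ) - (i : ℤ)) * ((k : ℤ) - (j : ℤ))) / 2

variable {V : Type*} [AddCommGroup V] [Module ℂ V]

/-- `x^i_n`: equals the given `x^i_0` for `n = 0`, and `−(1/n) α^i_n` for `n ≠ 0`. -/
noncomputable def xop (α : Fin 3 → ℤ → Module.End ℂ V) (x0 : Fin 3 → Module.End ℂ V)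
    (i : Fin 3) (n : ℤ) : Module.End ℂ V :=
  if n = 0 then x0 i else (-(n : ℂ)⁻¹) • α i n

/-- `P_i = β_{i,0} + Σ_{j,k} ε_{ijk} x^j_0 W^k − ½ Σ_{j,k} ε_{ijk} Σ_{m∈ℤ} m x^j_{−m} x^k_m`,
defined pointwise on vectors (the inner sum has finitely many nonzero terms on each vector). -/
noncomputable def Pop (α β : Fin 3 → ℤ → Module.End ℂ V) (x0 : Fin 3 → Module.End ℂ V)
    (i : Fin 3) : V → V := fun v =>
  β i 0 v + (∑ j : Fin 3, ∑ k : Fin 3, eps i j k • (x0 j) ((α k 0) v))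
    - (2 : ℂ)⁻¹ • ∑ j : Fin 3, ∑ k : Fin 3, eps i j k •
        ∑ᶠ m : ℤ, (m : ℂ) • (xop α x0 j (-m)) ((xop α x0 k m) v)

/-- `x*_{i,n} = −(1/n)(β_{i,n} + Σ_{j,k} ε_{ijk} x^j_n W^k − ½ Σ_{j,k} ε_{ijk} Σ_m m x^j_{n−m} x^k_m)`
for `n ≠ 0`, defined pointwise on vectors. -/
noncomputable def xstarop (α β : Fin 3 → ℤ → Module.End ℂ V) (x0 : Fin 3 → Module.End ℂ V)
    (i : Fin 3) (n : ℤ) : V → V := fun v =>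
  (-(n : ℂ)⁻¹) • (β i n v + (∑ j : Fin 3, ∑ k : Fin 3, eps i j k • (xop α x0 j n) ((α k 0) v))
    - (2 : ℂ)⁻¹ • ∑ j : Fin 3, ∑ k : Fin 3, eps i j k •
        ∑ᶠ m : ℤ, (m : ℂ) • (xop α x0 j (n - m)) ((xop α x0 k m) v))

/-!
Write `P_i = β_{i,0} + A_i - ½ S_i` with `A_i = Σ ε_{ijk} x^j_0 W^k` and `S_i` the quadratic mode
term, an endomorphism because (R4) makes its sum over `m` finite on each vector. The `α^i_n` and
`x^i_0` generate a commutative algebra containing every `x^j_n` and `A_i`, and `S_i` only involves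
the `x^j_n` with `n ≠ 0`, which commute with `β_{i,0}` by (R2). Hence the only brackets that survive
are `[β_{i,0}, β_{j,0}] = Σ ε_{ijk} W^k` and, via (R6), `[β_{i,0}, A_j] = [A_i, β_{j,0}] =
-Σ ε_{ijk} W^k`.
-/

section LocallyFiniteSum

variable {R M ι : Type*} [Semiring R] [AddCommMonoid M] [Module R M]

noncomputable def Module.End.locallyFiniteSum (f : ι → Module.End R M)
    (hf : ∀ v, (fun i => f i v).HasFiniteSupport) : Module.End R M where
  toFun v := ∑ᶠ i, f i v
  map_add' u w := by
    simp only [map_add]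
    exact finsum_add_distrib (hf u) (hf w)
  map_smul' c u := by
    simp only [map_smul, RingHom.id_apply]
    exact (smul_finsum' c (hf u)).symm

lemma Module.End.locallyFiniteSum_apply (f : ι → Module.End R M)
    (hf : ∀ v, (fun i => f i v).HasFiniteSupport) (v : M) :
    locallyFiniteSum f hf v = ∑ᶠ i, f i v := rfl

lemma Module.End.commute_locallyFiniteSum {f : ι → Module.End R M}
    (hf : ∀ v, (fun i => f i v).HasFiniteSupport) {g : Module.End R M}
    (hg : ∀ i, Commute g (f i)) : Commute g (locallyFiniteSum f hf) :=
  LinearMap.ext fun v => by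
    rw [Module.End.mul_apply, Module.End.mul_apply, locallyFiniteSum_apply,
      locallyFiniteSum_apply]
    refine (g.toAddMonoidHom.map_finsum (hf v)).trans ?_
    exact finsum_congr fun i => LinearMap.congr_fun (hg i) v

end LocallyFiniteSum

lemma lie_mul_of_commute {A : Type*} [Ring A] {a b c : A} (h : Commute a c) :
    ⁅a, b * c⁆ = ⁅a, b⁆ * c := by
  simp only [Ring.lie_def, sub_mul, mul_assoc]
  rw [h.eq]

lemma sum_eps_swap_smul {M : Type*} [AddCommGroup M] (i j : Fin 3) (w : Fin 3 → M) :
    ∑ k, eps j i k • w k = -∑ k, eps i j k • w k := by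
  rw [← Finset.sum_neg_distrib]
  refine Finset.sum_congr rfl fun k _ => ?_
  rw [← neg_smul]
  congr 1
  revert i j k
  decide

section Modes

variable {α : Fin 3 → ℤ → Module.End ℂ V} {x0 : Fin 3 → Module.End ℂ V}

variable (α x0) in
def coordinateSubalgebra : Subalgebra ℂ (Module.End ℂ V) :=
  Algebra.adjoin ℂ (Set.range (Function.uncurry α) ∪ Set.range x0)

lemma alpha_mem_coordinateSubalgebra (p : Fin 3) (n : ℤ) :
    α p n ∈ coordinateSubalgebra α x0 :=
  Algebra.subset_adjoin (Or.inl ⟨(p, n), rfl⟩)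

lemma xop_mem_coordinateSubalgebra (p : Fin 3) (n : ℤ) :
    xop α x0 p n ∈ coordinateSubalgebra α x0 := by
  unfold xop
  split_ifs
  · exact Algebra.subset_adjoin (Or.inr ⟨p, rfl⟩)
  · exact Subalgebra.smul_mem _ (alpha_mem_coordinateSubalgebra p n) _

lemma commute_of_mem_coordinateSubalgebra
    (hR1 : ∀ (i j : Fin 3) (m n : ℤ), ⁅α i m, α j n⁆ = 0)
    (hR5a : ∀ (i j : Fin 3) (n : ℤ), ⁅α j n, x0 i⁆ = 0)
    (hR5b : ∀ i j : Fin 3, ⁅x0 i, x0 j⁆ = 0)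
    {a b : Module.End ℂ V} (ha : a ∈ coordinateSubalgebra α x0)
    (hb : b ∈ coordinateSubalgebra α x0) : Commute a b := by
  have hgen : ∀ c ∈ Set.range (Function.uncurry α) ∪ Set.range x0,
      ∀ d ∈ Set.range (Function.uncurry α) ∪ Set.range x0, Commute c d := by
    rintro _ (⟨⟨p, m⟩, rfl⟩ | ⟨p, rfl⟩) _ (⟨⟨q, n⟩, rfl⟩ | ⟨q, rfl⟩)
    · exact commute_iff_lie_eq.2 (hR1 p q m n)
    · exact commute_iff_lie_eq.2 (hR5a q p m)
    · exact (commute_iff_lie_eq.2 (hR5a p q n)).symm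
    · exact commute_iff_lie_eq.2 (hR5b p q)
  exact Algebra.commute_of_mem_adjoin_of_forall_mem_commute hb fun d hd =>
    (Algebra.commute_of_mem_adjoin_of_forall_mem_commute ha fun c hc => hgen d hd c hc).symm

lemma commute_xop_of_ne_zero (hR1 : ∀ (i j : Fin 3) (m n : ℤ), ⁅α i m, α j n⁆ = 0)
    (p q : Fin 3) {m n : ℤ} (hm : m ≠ 0) (hn : n ≠ 0) :
    Commute (xop α x0 p m) (xop α x0 q n) := by
  simp only [xop, if_neg hm, if_neg hn]
  exact ((commute_iff_lie_eq.2 (hR1 p q m n)).smul_left _).smul_right _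

variable (α x0) in
noncomputable def modeProduct (j k : Fin 3) (m : ℤ) : Module.End ℂ V :=
  (m : ℂ) • (xop α x0 j (-m) * xop α x0 k m)

lemma modeProduct_hasFiniteSupport (hR1 : ∀ (i j : Fin 3) (m n : ℤ), ⁅α i m, α j n⁆ = 0)
    (hα : ∀ v : V, ∃ N : ℤ, ∀ (i : Fin 3) (n : ℤ), N ≤ n → α i n v = 0)
    (j k : Fin 3) (v : V) : (fun m => modeProduct α x0 j k m v).HasFiniteSupport := by
  obtain ⟨N, hN⟩ := hα v
  have hx : ∀ (p : Fin 3) (n : ℤ), n ≠ 0 → N ≤ n → xop α x0 p n v = 0 := fun p n hn hNn => by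
    simp [xop, hn, hN p n hNn]
  refine (Set.finite_Ioo (-N) N).subset fun m hm => ?_
  rw [Function.mem_support] at hm
  rcases eq_or_ne m 0 with rfl | hm0
  · simp [modeProduct] at hm
  by_contra hout
  simp only [Set.mem_Ioo, not_and_or, not_lt] at hout
  apply hm
  rcases hout with hlow | hhigh
  · rw [modeProduct, LinearMap.smul_apply,
      (commute_xop_of_ne_zero hR1 j k (neg_ne_zero.2 hm0) hm0).eq, Module.End.mul_apply,
      hx j (-m) (neg_ne_zero.2 hm0) (by omega), map_zero, smul_zero]
  · rw [modeProduct, LinearMap.smul_apply, Module.End.mul_apply, hx k m hm0 hhigh, map_zero,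
      smul_zero]

variable (α x0) in
def xCrossW (i : Fin 3) : Module.End ℂ V :=
  ∑ j, ∑ k, eps i j k • (x0 j * α k 0)

variable (α x0) in
noncomputable def modeCross
    (hfin : ∀ (j k : Fin 3) (v : V), (fun m => modeProduct α x0 j k m v).HasFiniteSupport)
    (i : Fin 3) : Module.End ℂ V :=
  ∑ j, ∑ k, eps i j k • Module.End.locallyFiniteSum (modeProduct α x0 j k) (hfin j k)

lemma xCrossW_mem_coordinateSubalgebra (i : Fin 3) :
    xCrossW α x0 i ∈ coordinateSubalgebra α x0 :=
  Subalgebra.sum_mem _ fun j _ => Subalgebra.sum_mem _ fun k _ =>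
    Subalgebra.zsmul_mem _ (Subalgebra.mul_mem _ (xop_mem_coordinateSubalgebra (α := α) j 0)
      (alpha_mem_coordinateSubalgebra k 0)) _

lemma commute_modeCross
    {hfin : ∀ (j k : Fin 3) (v : V), (fun m => modeProduct α x0 j k m v).HasFiniteSupport}
    {g : Module.End ℂ V} (hg : ∀ (p : Fin 3) (n : ℤ), n ≠ 0 → Commute g (xop α x0 p n))
    (i : Fin 3) : Commute g (modeCross α x0 hfin i) := by
  refine Commute.sum_right _ _ _ fun j _ => Commute.sum_right _ _ _ fun k _ =>
    Commute.smul_right (Module.End.commute_locallyFiniteSum _ fun m => ?_) _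
  rcases eq_or_ne m 0 with rfl | hm
  · simp [modeProduct]
  · exact ((hg j (-m) (neg_ne_zero.2 hm)).mul_right (hg k m hm)).smul_right _

end Modes

section Momentum

attribute [local instance] LieRing.ofAssociativeRing LieAlgebra.ofAssociativeAlgebra

variable {α β : Fin 3 → ℤ → Module.End ℂ V} {x0 : Fin 3 → Module.End ℂ V}

lemma commute_beta_zero_alpha
    (hR2 : ∀ (i j : Fin 3) (m n : ℤ), ⁅β i m, α j n⁆
      = if i = j ∧ m + n = 0 then (m : ℂ) • (1 : Module.End ℂ V) else 0)
    (b p : Fin 3) (n : ℤ) : Commute (β b 0) (α p n) :=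
  commute_iff_lie_eq.2 (by simp [hR2])

lemma commute_beta_zero_xop
    (hR2 : ∀ (i j : Fin 3) (m n : ℤ), ⁅β i m, α j n⁆
      = if i = j ∧ m + n = 0 then (m : ℂ) • (1 : Module.End ℂ V) else 0)
    (b p : Fin 3) {n : ℤ} (hn : n ≠ 0) : Commute (β b 0) (xop α x0 p n) := by
  simp only [xop, if_neg hn]
  exact (commute_beta_zero_alpha hR2 b p n).smul_right _

lemma lie_beta_zero_xCrossW
    (hR2 : ∀ (i j : Fin 3) (m n : ℤ), ⁅β i m, α j n⁆
      = if i = j ∧ m + n = 0 then (m : ℂ) • (1 : Module.End ℂ V) else 0)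
    (hR6 : ∀ (i j : Fin 3) (n : ℤ), ⁅β j n, x0 i⁆
      = if i = j ∧ n = 0 then (1 : Module.End ℂ V) else 0)
    (b a : Fin 3) : ⁅β b 0, xCrossW α x0 a⁆ = ∑ k, eps a b k • α k 0 := by
  simp only [xCrossW, lie_sum, lie_zsmul, lie_mul_of_commute (commute_beta_zero_alpha hR2 _ _ _),
    hR6]
  simp

variable (α β x0) in
noncomputable def momentum
    (hfin : ∀ (j k : Fin 3) (v : V), (fun m => modeProduct α x0 j k m v).HasFiniteSupport)
    (i : Fin 3) : Module.End ℂ V :=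
  β i 0 + xCrossW α x0 i - (2 : ℂ)⁻¹ • modeCross α x0 hfin i

lemma Pop_eq_momentum
    (hfin : ∀ (j k : Fin 3) (v : V), (fun m => modeProduct α x0 j k m v).HasFiniteSupport)
    (i : Fin 3) : Pop α β x0 i = momentum α β x0 hfin i := by
  funext v
  simp [Pop, momentum, xCrossW, modeCross, Module.End.locallyFiniteSum_apply, modeProduct]

lemma lie_momentum
    (hR1 : ∀ (i j : Fin 3) (m n : ℤ), ⁅α i m, α j n⁆ = 0)
    (hR2 : ∀ (i j : Fin 3) (m n : ℤ), ⁅β i m, α j n⁆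
      = if i = j ∧ m + n = 0 then (m : ℂ) • (1 : Module.End ℂ V) else 0)
    (hR3 : ∀ (i j : Fin 3) (m n : ℤ), ⁅β i m, β j n⁆ = ∑ k : Fin 3, eps i j k • α k (m + n))
    (hR5a : ∀ (i j : Fin 3) (n : ℤ), ⁅α j n, x0 i⁆ = 0)
    (hR5b : ∀ i j : Fin 3, ⁅x0 i, x0 j⁆ = 0)
    (hR6 : ∀ (i j : Fin 3) (n : ℤ), ⁅β j n, x0 i⁆
      = if i = j ∧ n = 0 then (1 : Module.End ℂ V) else 0)
    (hfin : ∀ (j k : Fin 3) (v : V), (fun m => modeProduct α x0 j k m v).HasFiniteSupport)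
    (i j : Fin 3) :
    ⁅momentum α β x0 hfin i, momentum α β x0 hfin j⁆ = -∑ k, eps i j k • α k 0 := by
  have hcomm {a b} := commute_of_mem_coordinateSubalgebra hR1 hR5a hR5b (a := a) (b := b)
  have hxop := xop_mem_coordinateSubalgebra (α := α) (x0 := x0)
  have hBB : ⁅β i 0, β j 0⁆ = ∑ k, eps i j k • α k 0 := by simpa using hR3 i j 0 0
  have hBA : ⁅β i 0, xCrossW α x0 j⁆ = -∑ k, eps i j k • α k 0 := by
    rw [lie_beta_zero_xCrossW hR2 hR6, sum_eps_swap_smul]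
  have hAB : ⁅xCrossW α x0 i, β j 0⁆ = -∑ k, eps i j k • α k 0 := by
    rw [← lie_skew, lie_beta_zero_xCrossW hR2 hR6]
  have hAA : Commute (xCrossW α x0 i) (xCrossW α x0 j) :=
    hcomm (xCrossW_mem_coordinateSubalgebra i) (xCrossW_mem_coordinateSubalgebra j)
  have hBS (a b : Fin 3) : Commute (β a 0) (modeCross α x0 hfin b) :=
    commute_modeCross (fun p _ hn => commute_beta_zero_xop hR2 a p hn) b
  have hAS (a b : Fin 3) : Commute (xCrossW α x0 a) (modeCross α x0 hfin b) :=
    commute_modeCross (fun p n _ => hcomm (xCrossW_mem_coordinateSubalgebra a) (hxop p n)) b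
  have hSS : Commute (modeCross α x0 hfin i) (modeCross α x0 hfin j) :=
    commute_modeCross (fun p n _ =>
      (commute_modeCross (fun q m _ => hcomm (hxop p n) (hxop q m)) i).symm) j
  simp only [momentum, lie_add, add_lie, lie_sub, sub_lie, lie_smul, smul_lie, hBB, hBA, hAB,
    hAA.lie_eq, (hBS i j).lie_eq, (hBS j i).symm.lie_eq, (hAS i j).lie_eq, (hAS j i).symm.lie_eq,
    hSS.lie_eq, smul_zero, sub_zero, add_zero]
  abel

end Momentum

/-- `[P_i, P_j] = −Σ_k ε_{ijk} W^k` (as endomorphisms, checked pointwise). -/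
theorem P_P_commutator
    (α β : Fin 3 → ℤ → Module.End ℂ V) (x0 : Fin 3 → Module.End ℂ V)
    (R1 : ∀ (i j : Fin 3) (m n : ℤ), ⁅α i m, α j n⁆ = 0)
    (R2 : ∀ (i j : Fin 3) (m n : ℤ), ⁅β i m, α j n⁆
      = if i = j ∧ m + n = 0 then (m : ℂ) • (1 : Module.End ℂ V) else 0)
    (R3 : ∀ (i j : Fin 3) (m n : ℤ), ⁅β i m, β j n⁆ = ∑ k : Fin 3, eps i j k • α k (m + n))
    (R4 : ∀ v : V, ∃ N : ℤ, ∀ (i : Fin 3) (n : ℤ), N ≤ n → α i n v = 0 ∧ β i n v = 0)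
    (R5a : ∀ (i j : Fin 3) (n : ℤ), ⁅α j n, x0 i⁆ = 0)
    (R5b : ∀ i j : Fin 3, ⁅x0 i, x0 j⁆ = 0)
    (R6 : ∀ (i j : Fin 3) (n : ℤ), ⁅β j n, x0 i⁆
      = if i = j ∧ n = 0 then (1 : Module.End ℂ V) else 0)
    (i j : Fin 3) (v : V) :
    Pop α β x0 i (Pop α β x0 j v) - Pop α β x0 j (Pop α β x0 i v)
      = -∑ k : Fin 3, eps i j k • (α k 0) v := by
  have hfin := modeProduct_hasFiniteSupport (x0 := x0) R1
    fun v => (R4 v).imp fun _ hN i n h => (hN i n h).1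
  rw [Pop_eq_momentum hfin, Pop_eq_momentum hfin, ← Module.End.mul_apply, ← Module.End.mul_apply,
    ← LinearMap.sub_apply, ← Ring.lie_def, lie_momentum R1 R2 R3 R5a R5b R6 hfin]
  simp
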